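/- arXiv:2507.04256 — 2 statements merged into one kernel-verified Lean document; each statement's English description precedes it below -/
import Mathlib

section
/- Let e be an index entry with per-coordinate bounds [Lᵢ, Uᵢ] containing the pivot images of all its objects (Lᵢ ≤ δᵢ(oᵢ, pᵢ) ≤ Uᵢ). Define mindist(q, e) = Σᵢ wᵢ · max(0, max(Lᵢ − δᵢ(qᵢ, pᵢ), δᵢ(qᵢ, pᵢ) − Uᵢ)). Then for every object o in e, δ_W(q, o) ≥ mindist(q, e); hence if mindist(q, e) > r, the entire entry can be pruned for MMRQ(q, W, r). -/
theorem mindist_lower_bound {m : ℕ} {M : Fin m → Type*} [∀ i, MetricSpace (M i)]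
    (p q : ∀ i, M i) (w L U : Fin m → ℝ) (hw : ∀ i, 0 ≤ w i)
    (e : Set (∀ i, M i))
    (hbox : ∀ o ∈ e, ∀ i, L i ≤ dist (o i) (p i) ∧ dist (o i) (p i) ≤ U i) (r : ℝ) :
    (∀ o ∈ e,
      ∑ i, w i * max 0 (max (L i - dist (q i) (p i)) (dist (q i) (p i) - U i)) ≤
        ∑ i, w i * dist (q i) (o i)) ∧
    ((∑ i, w i * max 0 (max (L i - dist (q i) (p i)) (dist (q i) (p i) - U i))) > r →
      ∀ o ∈ e, ¬ (∑ i, w i * dist (q i) (o i) ≤ r)) := by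
  have key : ∀ o ∈ e,
      ∑ i, w i * max 0 (max (L i - dist (q i) (p i)) (dist (q i) (p i) - U i)) ≤
        ∑ i, w i * dist (q i) (o i) := by
    intro o ho
    apply Finset.sum_le_sum
    intro i _
    apply mul_le_mul_of_nonneg_left _ (hw i)
    have h1 := (hbox o ho i).1
    have h2 := (hbox o ho i).2
    have ht : |dist (q i) (p i) - dist (o i) (p i)| ≤ dist (q i) (o i) :=
      abs_dist_sub_le _ _ _
    rw [abs_le] at ht
    have hd : (0:ℝ) ≤ dist (q i) (o i) := dist_nonneg
    exact max_le hd (max_le (by linarith [ht.1]) (by linarith [ht.2]))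
  exact ⟨key, fun hgt o ho hle => absurd hle (not_le.mpr (lt_of_lt_of_le hgt (key o ho)))⟩
end

section
/- Let δᵢ be metrics and wᵢ ∈ [0,1] with at least one wᵢ = 1 for some index i₀ (i.e., the separating modality has full weight). If the interval [δ_{i₀}(q_{i₀}, p_{i₀}) − r, δ_{i₀}(q_{i₀}, p_{i₀}) + r] is disjoint from [L_{i₀}, U_{i₀}], where L_{i₀} ≤ δ_{i₀}(o_{i₀}, p_{i₀}) ≤ U_{i₀}, then δ_W(q, o) ≥ δ_{i₀}(q_{i₀}, o_{i₀}) > r. -/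
theorem global_pruning_full_weight {m : ℕ} {M : Fin m → Type*} [∀ i, MetricSpace (M i)]
    (p q o : ∀ i, M i) (w : Fin m → ℝ) (hw : ∀ i, w i ∈ Set.Icc (0 : ℝ) 1)
    (i₀ : Fin m) (hw₀ : w i₀ = 1) (L U : Fin m → ℝ) (r : ℝ) (hr : 0 ≤ r)
    (hbox : L i₀ ≤ dist (o i₀) (p i₀) ∧ dist (o i₀) (p i₀) ≤ U i₀)
    (hdisj : Disjoint (Set.Icc (dist (q i₀) (p i₀) - r) (dist (q i₀) (p i₀) + r))
      (Set.Icc (L i₀) (U i₀))) :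
    ∑ i, w i * dist (q i) (o i) ≥ dist (q i₀) (o i₀) ∧ dist (q i₀) (o i₀) > r := by
  have hmem : dist (o i₀) (p i₀) ∈ Set.Icc (L i₀) (U i₀) := ⟨hbox.1, hbox.2⟩
  have hnot : dist (o i₀) (p i₀) ∉
      Set.Icc (dist (q i₀) (p i₀) - r) (dist (q i₀) (p i₀) + r) := fun h =>
    Set.disjoint_left.mp hdisj h hmem
  simp only [Set.mem_Icc, not_and_or, not_le] at hnot
  have habs : r < |dist (q i₀) (p i₀) - dist (o i₀) (p i₀)| := by
    rcases hnot with h | h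
    · rw [lt_abs]; left; linarith
    · rw [abs_sub_comm, lt_abs]; left; linarith
  have htri : |dist (q i₀) (p i₀) - dist (o i₀) (p i₀)| ≤ dist (q i₀) (o i₀) :=
    abs_dist_sub_le _ _ _
  have hgt : dist (q i₀) (o i₀) > r := lt_of_lt_of_le habs htri
  refine ⟨?_, hgt⟩
  calc ∑ i, w i * dist (q i) (o i) ≥ w i₀ * dist (q i₀) (o i₀) := by
        apply Finset.single_le_sum (f := fun i => w i * dist (q i) (o i))
        · intro i _; exact mul_nonneg (hw i).1 dist_nonneg
        · exact Finset.mem_univ i₀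
    _ = dist (q i₀) (o i₀) := by rw [hw₀, one_mul]
end
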